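/- arXiv:1401.3321 — 4 statements merged into one kernel-verified Lean document; each statement's English description precedes it below -/
import Mathlib

section
/- Heine's q-Gauss summation formula: for |q|<1 and |c/(ab)|<1, the series ∑_{n=0}^∞ [(a;q)_n (b;q)_n / ((q;q)_n (c;q)_n)] (c/ab)^n converges and equals (c/a;q)_∞ (c/b;q)_∞ / [(c;q)_∞ (c/ab;q)_∞]. -/
noncomputable def qp (a q : ℂ) (n : ℕ) : ℂ := ∏ i ∈ Finset.range n, (1 - a * q ^ i)

noncomputable def qpInf (a q : ℂ) : ℂ := ∏' i : ℕ, (1 - a * q ^ i)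

/-!
Write `S c` for the series with parameter `c`. Its terms `t n c` satisfy
`(1 - c)(1 - c/ab) t n c - (1 - c/a)(1 - c/b) t n (cq) = (1 - c)(r n - r (n + 1))`
with `r n = (1 - q^n) t n c`, and `r 0 = 0`, so summing gives the contiguous relation
`(1 - c)(1 - c/ab) S c = (1 - c/a)(1 - c/b) S (cq)`. Iterating it `N` times gives
`S c · (c;q)_N (c/ab;q)_N = (c/a;q)_N (c/b;q)_N · S (c q^N)`, and `S (c q^N) → 1` by dominated
convergence, since the terms are bounded by a multiple of `‖c/ab‖^n` uniformly in `N`.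
-/

open Filter Topology

section Finite

variable (x q : ℂ)

@[simp]
lemma qp_zero : qp x q 0 = 1 := Finset.prod_range_zero _

lemma qp_succ (n : ℕ) : qp x q (n + 1) = qp x q n * (1 - x * q ^ n) :=
  Finset.prod_range_succ _ _

lemma qp_add (m n : ℕ) : qp x q (m + n) = qp x q m * qp (x * q ^ m) q n := by
  simp only [qp, Finset.prod_range_add, pow_add, mul_assoc]

lemma qp_succ' (n : ℕ) : qp x q (n + 1) = (1 - x) * qp (x * q) q n := by
  rw [add_comm, qp_add, pow_one]
  simp [qp]

variable {x q}

lemma qp_shift_ne_zero (hx : ∀ n, qp x q n ≠ 0) (m n : ℕ) : qp (x * q ^ m) q n ≠ 0 :=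
  right_ne_zero_of_mul (qp_add x q m n ▸ hx (m + n))

lemma one_sub_mul_pow_ne_zero (hx : ∀ n, qp x q n ≠ 0) (i : ℕ) : 1 - x * q ^ i ≠ 0 :=
  right_ne_zero_of_mul (qp_succ x q i ▸ hx (i + 1))

lemma qp_ne_zero_of_norm_lt_one (hq : ‖q‖ ≤ 1) (hx : ‖x‖ < 1) (n : ℕ) : qp x q n ≠ 0 := by
  refine Finset.prod_ne_zero_iff.mpr fun i _ h => ?_
  have hlt : ‖x * q ^ i‖ < 1 := by
    rw [norm_mul, norm_pow]
    exact (mul_le_of_le_one_right (norm_nonneg x) (pow_le_one₀ (norm_nonneg q) hq)).trans_lt hx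
  rw [← sub_eq_zero.mp h, norm_one] at hlt
  exact hlt.false

end Finite

lemma exists_pos_forall_norm_le_of_tendsto {E : Type*} [SeminormedAddCommGroup E] {u : ℕ → E}
    {x : E} (hu : Tendsto u atTop (𝓝 x)) : ∃ C > 0, ∀ n, ‖u n‖ ≤ C :=
  (Metric.isBounded_range_of_tendsto u hu).exists_pos_norm_le.imp
    fun _ ⟨hC0, hC⟩ => ⟨hC0, fun n => hC _ (Set.mem_range_self n)⟩

section Infinite

variable {q : ℂ} (hq : ‖q‖ < 1)
include hq

lemma summable_norm_mul_pow (x : ℂ) : Summable fun i : ℕ => ‖-(x * q ^ i)‖ := by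
  simpa [norm_mul, norm_pow] using
    (summable_geometric_of_lt_one (norm_nonneg q) hq).mul_left ‖x‖

lemma tendsto_qp_qpInf (x : ℂ) : Tendsto (qp x q) atTop (𝓝 (qpInf x q)) := by
  have := (multipliable_one_add_of_summable (summable_norm_mul_pow hq x)).tendsto_prod_tprod_nat
  simp only [← sub_eq_add_neg] at this
  exact this

lemma qpInf_ne_zero {x : ℂ} (hx : ∀ n, qp x q n ≠ 0) : qpInf x q ≠ 0 := by
  have := tprod_one_add_ne_zero_of_summable
    (fun i => by simpa [← sub_eq_add_neg] using one_sub_mul_pow_ne_zero hx i)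
    (summable_norm_mul_pow hq x)
  simp only [← sub_eq_add_neg] at this
  exact this

end Infinite

noncomputable def qGaussTerm (a b q c : ℂ) (n : ℕ) : ℂ :=
  qp a q n * qp b q n / (qp q q n * qp c q n) * (c / (a * b)) ^ n

noncomputable def qGaussSum (a b q c : ℂ) : ℂ := ∑' n, qGaussTerm a b q c n

section Series

variable {a b q c : ℂ}

lemma qGaussTerm_contiguous (ha : a ≠ 0) (hb : b ≠ 0) (hQ : ∀ n, qp q q n ≠ 0)
    (hc : ∀ n, qp c q n ≠ 0) (n : ℕ) :
    (1 - c) * (1 - c / (a * b)) * qGaussTerm a b q c n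
        - (1 - c / a) * (1 - c / b) * qGaussTerm a b q (c * q) n
      = (1 - c) * ((1 - q ^ n) * qGaussTerm a b q c n
        - (1 - q ^ (n + 1)) * qGaussTerm a b q c (n + 1)) := by
  have h1c : 1 - c ≠ 0 := by simpa [qp] using hc 1
  have hcn := one_sub_mul_pow_ne_zero hc n
  have hqn := one_sub_mul_pow_ne_zero hQ n
  have hshift : qp (c * q) q n = qp c q n * (1 - c * q ^ n) / (1 - c) := by
    rw [eq_div_iff h1c, ← qp_succ, qp_succ', mul_comm]
  simp only [qGaussTerm, qp_succ, hshift, pow_succ', mul_div_right_comm c q, mul_pow]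
  generalize qp a q n = A, qp b q n = B, qp q q n = Q, qp c q n = C, q ^ n = x,
    (c / (a * b)) ^ n = W at *
  have hxq : 1 - x * q ≠ 0 := by rwa [mul_comm]
  field_simp
  ring

lemma qGaussSum_contiguous (hq : ‖q‖ < 1) (ha : a ≠ 0) (hb : b ≠ 0) (hQ : ∀ n, qp q q n ≠ 0)
    (hc : ∀ n, qp c q n ≠ 0) (hs : Summable (qGaussTerm a b q c))
    (hs' : Summable (qGaussTerm a b q (c * q))) :
    (1 - c) * (1 - c / (a * b)) * qGaussSum a b q c
      = (1 - c / a) * (1 - c / b) * qGaussSum a b q (c * q) := by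
  set f : ℕ → ℂ := fun n => (1 - q ^ n) * qGaussTerm a b q c n
  have hf : Summable f := by
    simp only [f, sub_mul, one_mul]
    refine hs.sub (hs.norm.of_norm_bounded fun n => ?_)
    rw [norm_mul, norm_pow]
    exact mul_le_of_le_one_left (norm_nonneg _) (pow_le_one₀ (norm_nonneg q) hq.le)
  have htelescope : ∑' n, (f n - f (n + 1)) = 0 := by
    rw [hf.tsum_sub ((summable_nat_add_iff 1).mpr hf), hf.tsum_eq_zero_add]
    simp [f]
  rw [← sub_eq_zero, qGaussSum, qGaussSum, ← tsum_mul_left, ← tsum_mul_left,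
    ← (hs.mul_left _).tsum_sub (hs'.mul_left _)]
  simp_rw [qGaussTerm_contiguous ha hb hQ hc]
  rw [tsum_mul_left, htelescope, mul_zero]

end Series

section Shift

variable {a b q c : ℂ} (hq : ‖q‖ < 1) (hQ : ∀ n, qp q q n ≠ 0) (hc : ∀ n, qp c q n ≠ 0)
include hq hQ hc

lemma exists_norm_qGaussTerm_shift_le :
    ∃ K, ∀ N n, ‖qGaussTerm a b q (c * q ^ N) n‖ ≤ K * ‖c / (a * b)‖ ^ n := by
  have hqp := tendsto_qp_qpInf hq
  obtain ⟨A, hA0, hA⟩ := exists_pos_forall_norm_le_of_tendsto (hqp a)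
  obtain ⟨B, hB0, hB⟩ := exists_pos_forall_norm_le_of_tendsto (hqp b)
  obtain ⟨C, hC0, hC⟩ := exists_pos_forall_norm_le_of_tendsto (hqp c)
  obtain ⟨Q', hQ'0, hQ'⟩ :=
    exists_pos_forall_norm_le_of_tendsto ((hqp q).inv₀ (qpInf_ne_zero hq hQ))
  obtain ⟨C', hC'0, hC'⟩ :=
    exists_pos_forall_norm_le_of_tendsto ((hqp c).inv₀ (qpInf_ne_zero hq hc))
  refine ⟨A * B * Q' * C * C', fun N n => ?_⟩
  have hshift : (qp (c * q ^ N) q n)⁻¹ = qp c q N * (qp c q (N + n))⁻¹ := by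
    rw [qp_add, mul_inv, ← mul_assoc, mul_inv_cancel₀ (hc N), one_mul]
  have hpow : ‖(c * q ^ N / (a * b)) ^ n‖ ≤ ‖c / (a * b)‖ ^ n := by
    rw [mul_div_right_comm, mul_pow, norm_mul, norm_pow, norm_pow, norm_pow, ← pow_mul]
    exact mul_le_of_le_one_right (by positivity) (pow_le_one₀ (norm_nonneg q) hq.le)
  calc ‖qGaussTerm a b q (c * q ^ N) n‖
      = ‖qp a q n‖ * ‖qp b q n‖ * ‖(qp q q n)⁻¹‖ * ‖qp c q N‖ * ‖(qp c q (N + n))⁻¹‖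
          * ‖(c * q ^ N / (a * b)) ^ n‖ := by
        rw [qGaussTerm, div_eq_mul_inv, mul_inv, hshift]
        simp only [norm_mul]
        ring
    _ ≤ A * B * Q' * C * C' * ‖c / (a * b)‖ ^ n := by
        gcongr
        exacts [hA n, hB n, hQ' n, hC N, hC' (N + n)]

variable (hw : ‖c / (a * b)‖ < 1)
include hw

lemma summable_qGaussTerm_shift (N : ℕ) : Summable (qGaussTerm a b q (c * q ^ N)) := by
  obtain ⟨K, hK⟩ := exists_norm_qGaussTerm_shift_le (a := a) (b := b) hq hQ hc
  exact ((summable_geometric_of_lt_one (norm_nonneg _) hw).mul_left K).of_norm_bounded (hK N)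

lemma tendsto_qGaussSum_shift :
    Tendsto (fun N => qGaussSum a b q (c * q ^ N)) atTop (𝓝 1) := by
  obtain ⟨K, hK⟩ := exists_norm_qGaussTerm_shift_le (a := a) (b := b) hq hQ hc
  have hsum_zero : qGaussSum a b q 0 = 1 := by
    rw [qGaussSum, tsum_eq_single 0 fun n hn => by simp [qGaussTerm, hn]]
    simp [qGaussTerm]
  have hc0 : Tendsto (fun N => c * q ^ N) atTop (𝓝 0) := by
    simpa using (tendsto_pow_atTop_nhds_zero_of_norm_lt_one hq).const_mul c
  rw [← hsum_zero]
  refine tendsto_tsum_of_dominated_convergence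
    ((summable_geometric_of_lt_one (norm_nonneg _) hw).mul_left K) (fun n => ?_)
    (Eventually.of_forall hK)
  have hcont : ContinuousAt (fun x => qGaussTerm a b q x n) 0 := by
    simp only [qGaussTerm, qp]
    fun_prop (disch := simpa [qp] using hQ n)
  exact hcont.tendsto.comp hc0

variable (ha : a ≠ 0) (hb : b ≠ 0)
include ha hb

lemma qGaussSum_mul_qp (N : ℕ) :
    qGaussSum a b q c * (qp c q N * qp (c / (a * b)) q N)
      = qp (c / a) q N * qp (c / b) q N * qGaussSum a b q (c * q ^ N) := by
  induction N with
  | zero => simp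
  | succ N ih =>
    have hstep := qGaussSum_contiguous hq ha hb hQ (qp_shift_ne_zero hc N)
      (summable_qGaussTerm_shift hq hQ hc hw N)
      (by simpa only [pow_succ, mul_assoc] using summable_qGaussTerm_shift hq hQ hc hw (N + 1))
    simp only [mul_div_right_comm c (q ^ N), mul_assoc c (q ^ N) q, ← pow_succ] at hstep
    simp only [qp_succ]
    linear_combination (1 - c * q ^ N) * (1 - c / (a * b) * q ^ N) * ih
      + qp (c / a) q N * qp (c / b) q N * hstep

lemma qGaussSum_mul_qpInf :
    qGaussSum a b q c * (qpInf c q * qpInf (c / (a * b)) q)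
      = qpInf (c / a) q * qpInf (c / b) q := by
  have hqp := tendsto_qp_qpInf hq
  have hlim := ((hqp (c / a)).mul (hqp (c / b))).mul (tendsto_qGaussSum_shift hq hQ hc hw)
  rw [mul_one] at hlim
  refine tendsto_nhds_unique ?_ hlim
  exact (tendsto_const_nhds.mul ((hqp c).mul (hqp _))).congr (qGaussSum_mul_qp hq hQ hc hw ha hb)

end Shift

theorem stmt3 (q a b c : ℂ) (hq : ‖q‖ < 1) (ha : a ≠ 0) (hb : b ≠ 0)
    (hz : ‖c / (a * b)‖ < 1)
    (hden : ∀ n : ℕ, qp q q n * qp c q n ≠ 0) :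
    HasSum
      (fun n : ℕ => qp a q n * qp b q n / (qp q q n * qp c q n) * (c / (a * b)) ^ n)
      (qpInf (c / a) q * qpInf (c / b) q / (qpInf c q * qpInf (c / (a * b)) q)) := by
  have hQ n := left_ne_zero_of_mul (hden n)
  have hc n := right_ne_zero_of_mul (hden n)
  have hzInf : qpInf (c / (a * b)) q ≠ 0 :=
    qpInf_ne_zero hq (qp_ne_zero_of_norm_lt_one hq.le hz)
  rw [← qGaussSum_mul_qpInf hq hQ hc hz ha hb,
    mul_div_cancel_right₀ _ (mul_ne_zero (qpInf_ne_zero hq hc) hzInf)]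
  have hs : Summable (qGaussTerm a b q c) := by
    simpa using summable_qGaussTerm_shift hq hQ hc hz 0
  exact hs.hasSum
end

section
/- The (q,μ,ν)-deformed binomial weights sum to one: for |q|<1, 0 ≤ ν ≤ μ < 1, and any m ∈ ℕ, ∑_{j=0}^{m} φ_{q,μ,ν}(j|m) = 1, where φ_{q,μ,ν}(j|m) = μ^j (ν/μ;q)_j (μ;q)_{m-j} (q;q)_m / [(ν;q)_m (q;q)_j (q;q)_{m-j}]. -/
/-!
Writing `[m, j]_q` for the Gaussian binomial coefficient, so that
`[m, j]_q (q;q)_j (q;q)_{m-j} = (q;q)_m`, the weight `φ(j|m)` is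
`[m, j]_q μ^j (ν/μ;q)_j (μ;q)_{m-j} / (ν;q)_m`. Cauchy's q-binomial identity
`∑_j [m, j]_q b^j (a;q)_j (b;q)_{m-j} = (ab;q)_m`, taken at `a = ν/μ`, `b = μ`, turns the
numerator of the sum into `(ν;q)_m`.
-/

noncomputable def qpR (a q : ℝ) (n : ℕ) : ℝ := ∏ i ∈ Finset.range n, (1 - a * q ^ i)

noncomputable def phi (q μ ν : ℝ) (j m : ℕ) : ℝ :=
  μ ^ j * qpR (ν / μ) q j * qpR μ q (m - j) * qpR q q m
    / (qpR ν q m * qpR q q j * qpR q q (m - j))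

open Finset

@[simp]
lemma qpR_zero (a q : ℝ) : qpR a q 0 = 1 := prod_range_zero _

lemma qpR_succ (a q : ℝ) (n : ℕ) : qpR a q (n + 1) = qpR a q n * (1 - a * q ^ n) :=
  prod_range_succ _ _

lemma qpR_ne_zero {a q : ℝ} (ha : |a| < 1) (hq : |q| ≤ 1) (n : ℕ) : qpR a q n ≠ 0 := by
  refine prod_ne_zero_iff.2 fun i _ h => ?_
  have hlt : |a * q ^ i| < 1 := by
    rw [abs_mul, abs_pow]
    exact mul_lt_one_of_nonneg_of_lt_one_left (abs_nonneg a) ha (pow_le_one₀ (abs_nonneg q) hq)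
  rw [← sub_eq_zero.1 h, abs_one] at hlt
  exact lt_irrefl 1 hlt

-- Of the two Pascal rules, this is the one under which Cauchy's identity goes through
-- term by term in the induction on `m`.
noncomputable def gaussBinom (q : ℝ) : ℕ → ℕ → ℝ
  | _, 0 => 1
  | 0, _ + 1 => 0
  | m + 1, j + 1 => gaussBinom q m (j + 1) + q ^ (m - j) * gaussBinom q m j

@[simp]
lemma gaussBinom_zero_right (q : ℝ) (m : ℕ) : gaussBinom q m 0 = 1 := by
  cases m <;> rfl

lemma gaussBinom_succ_succ (q : ℝ) (m j : ℕ) :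
    gaussBinom q (m + 1) (j + 1) = gaussBinom q m (j + 1) + q ^ (m - j) * gaussBinom q m j :=
  rfl

lemma gaussBinom_eq_zero_of_lt (q : ℝ) {m j : ℕ} (h : m < j) : gaussBinom q m j = 0 := by
  induction m generalizing j with
  | zero => obtain ⟨j, rfl⟩ := Nat.exists_eq_add_one_of_ne_zero h.ne'; rfl
  | succ m ih =>
    obtain ⟨j, rfl⟩ := Nat.exists_eq_add_one_of_ne_zero (Nat.ne_zero_of_lt h)
    rw [gaussBinom_succ_succ, ih (by omega), ih (by omega), mul_zero, add_zero]

lemma gaussBinom_mul_qpR (q : ℝ) {m j : ℕ} (h : j ≤ m) :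
    gaussBinom q m j * qpR q q j * qpR q q (m - j) = qpR q q m := by
  induction m generalizing j with
  | zero => obtain rfl := Nat.le_zero.1 h; simp
  | succ m ih =>
    rcases j with _ | k
    · simp
    have hfirst : gaussBinom q m (k + 1) * qpR q q (k + 1) * qpR q q (m - k)
        = qpR q q m * (1 - q ^ (m - k)) := by
      rcases (Nat.le_of_lt_succ h).lt_or_eq with hk | rfl
      · rw [← ih hk, show m - k = m - (k + 1) + 1 by omega, qpR_succ q q (m - (k + 1))]
        ring
      · simp [gaussBinom_eq_zero_of_lt q k.lt_succ_self]
    have hpow : q ^ (m - k) * q ^ k = q ^ m := by rw [← pow_add, Nat.sub_add_cancel (by omega)]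
    rw [qpR_succ q q k] at hfirst
    rw [gaussBinom_succ_succ, Nat.add_sub_add_right, qpR_succ q q k, qpR_succ q q m]
    linear_combination hfirst + q ^ (m - k) * (1 - q * q ^ k) * ih (Nat.le_of_lt_succ h)
      - q * qpR q q m * hpow

lemma sum_gaussBinom_succ_mul (q : ℝ) (m : ℕ) (f : ℕ → ℝ) :
    ∑ j ∈ range (m + 2), gaussBinom q (m + 1) j * f j
      = ∑ j ∈ range (m + 1), gaussBinom q m j * (f j + q ^ (m - j) * f (j + 1)) := by
  have htop : ∑ j ∈ range (m + 2), gaussBinom q m j * f j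
      = ∑ j ∈ range (m + 1), gaussBinom q m j * f j := by
    rw [sum_range_succ, gaussBinom_eq_zero_of_lt q m.lt_succ_self, zero_mul, add_zero]
  simp only [mul_add, sum_add_distrib]
  rw [← htop, sum_range_succ', sum_range_succ' _ (m + 1)]
  simp only [gaussBinom_succ_succ, gaussBinom_zero_right, add_mul, sum_add_distrib]
  simp only [mul_left_comm (q ^ _), mul_assoc]
  ring

theorem sum_gaussBinom_mul_qpR (a b q : ℝ) (m : ℕ) :
    ∑ j ∈ range (m + 1), gaussBinom q m j * (b ^ j * qpR a q j * qpR b q (m - j))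
      = qpR (a * b) q m := by
  induction m with
  | zero => simp
  | succ m ih =>
    rw [sum_gaussBinom_succ_mul, qpR_succ, ← ih, sum_mul]
    refine sum_congr rfl fun j hj => ?_
    have hjm : j ≤ m := Nat.le_of_lt_succ (mem_range.1 hj)
    have hpow : q ^ (m - j) * q ^ j = q ^ m := by rw [← pow_add, Nat.sub_add_cancel hjm]
    rw [show m + 1 - j = m - j + 1 by omega, Nat.add_sub_add_right, qpR_succ b, qpR_succ a]
    linear_combination (-a * b * gaussBinom q m j * b ^ j * qpR a q j * qpR b q (m - j)) * hpow

lemma phi_eq (q μ ν : ℝ) {j m : ℕ} (hjm : j ≤ m) (hj : qpR q q j ≠ 0) (hmj : qpR q q (m - j) ≠ 0) :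
    phi q μ ν j m
      = gaussBinom q m j * (μ ^ j * qpR (ν / μ) q j * qpR μ q (m - j)) / qpR ν q m := by
  rw [phi, ← gaussBinom_mul_qpR q hjm, mul_assoc (qpR ν q m),
    ← mul_div_mul_right (gaussBinom q m j * _) (qpR ν q m) (mul_ne_zero hj hmj)]
  ring

theorem stmt5_general (q μ ν : ℝ) (hq : |q| < 1) (hν : 0 ≤ ν) (hνμ : ν ≤ μ)
    (hμ : μ < 1) (m : ℕ) :
    ∑ j ∈ Finset.range (m + 1), phi q μ ν j m = 1 := by
  have hqq : ∀ n, qpR q q n ≠ 0 := qpR_ne_zero hq hq.le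
  have hνm : qpR ν q m ≠ 0 := qpR_ne_zero (abs_lt.2 ⟨by linarith, by linarith⟩) hq.le m
  -- `μ = 0` forces `ν = 0`, so the junk value `ν / 0 = 0` does no harm
  have hνμ' : ν / μ * μ = ν := div_mul_cancel_of_imp fun h => le_antisymm (h ▸ hνμ) hν
  calc ∑ j ∈ range (m + 1), phi q μ ν j m
      = ∑ j ∈ range (m + 1),
          gaussBinom q m j * (μ ^ j * qpR (ν / μ) q j * qpR μ q (m - j)) / qpR ν q m :=
        sum_congr rfl fun j hj => phi_eq q μ ν (Nat.le_of_lt_succ (mem_range.1 hj)) (hqq _) (hqq _)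
    _ = 1 := by rw [← sum_div, sum_gaussBinom_mul_qpR, hνμ', div_self hνm]

theorem stmt5 (q μ ν : ℝ) (hq : |q| < 1) (hν : 0 ≤ ν) (hνμ : ν ≤ μ)
    (hμ0 : 0 < μ) (hμ : μ < 1) (m : ℕ) :
    ∑ j ∈ Finset.range (m + 1), phi q μ ν j m = 1 :=
  stmt5_general q μ ν hq hν hνμ hμ m
end

section
/- Parameter-shift relation for the deformed binomial weights: for 0 ≤ j ≤ m and y ∈ ℕ, φ_{q, q^y μ, q^y ν}(j|m) = φ_{q,μ,ν}(j|m) · q^{yj} · (ν;q)_y (μ q^{m-j};q)_y / [(μ;q)_y (ν q^m;q)_y]. -/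
/-! Splitting `(a;q)_{n+k} = (a;q)_n (a q^n;q)_k` in two orders gives
`(a;q)_y (a q^y;q)_n = (a;q)_n (a q^n;q)_y`, which expresses the shifted symbols
`(q^y μ;q)_{m-j}` and `(q^y ν;q)_m` through the unshifted ones; the factor `(q^y μ)^j` supplies
`q^{yj}`, and the ratio `ν/μ` is unchanged by the common scaling. -/

lemma qpR_add (a q : ℝ) (n k : ℕ) :
    qpR a q (n + k) = qpR a q n * qpR (a * q ^ n) q k := by
  simp only [qpR, Finset.prod_range_add, pow_add, mul_assoc]

lemma qpR_mul_qpR_comm (a q : ℝ) (n k : ℕ) :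
    qpR a q k * qpR (a * q ^ k) q n = qpR a q n * qpR (a * q ^ n) q k := by
  rw [← qpR_add, ← qpR_add, add_comm]

lemma qpR_shift_eq_div (a q : ℝ) (n k : ℕ) (h : qpR a q k ≠ 0) :
    qpR (a * q ^ k) q n = qpR a q n * qpR (a * q ^ n) q k / qpR a q k :=
  eq_div_of_mul_eq h (by rw [mul_comm, qpR_mul_qpR_comm])

-- For `c = 0` the ratio is the junk value `0 / 0 = 0`, but then `(c * μ) ^ j = 0` unless `j = 0`.
lemma pow_mul_qpR_div_of_scale (c q μ ν : ℝ) (j : ℕ) :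
    (c * μ) ^ j * qpR (c * ν / (c * μ)) q j = c ^ j * (μ ^ j * qpR (ν / μ) q j) := by
  rcases eq_or_ne c 0 with rfl | hc
  · cases j <;> simp [qpR]
  · rw [mul_div_mul_left _ _ hc, mul_pow, mul_assoc]

theorem stmt10_general (q μ ν : ℝ) (j m y : ℕ)
    (h2 : qpR ν q m ≠ 0)
    (h5 : qpR μ q y ≠ 0) (h6 : qpR (ν * q ^ m) q y ≠ 0) :
    phi q (q ^ y * μ) (q ^ y * ν) j m
      = phi q μ ν j m * q ^ (y * j)
          * (qpR ν q y * qpR (μ * q ^ (m - j)) q y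
              / (qpR μ q y * qpR (ν * q ^ m) q y)) := by
  have hν : qpR ν q y ≠ 0 :=
    left_ne_zero_of_mul (qpR_mul_qpR_comm ν q m y ▸ mul_ne_zero h2 h6)
  unfold phi
  rw [pow_mul_qpR_div_of_scale, mul_comm (q ^ y) μ, mul_comm (q ^ y) ν,
    qpR_shift_eq_div μ q (m - j) y h5, qpR_shift_eq_div ν q m y hν]
  field_simp
  ring

theorem stmt10 (q μ ν : ℝ) (hq0 : q ≠ 0) (hμ0 : μ ≠ 0) (j m y : ℕ) (hjm : j ≤ m)
    (h1 : qpR (q ^ y * ν) q m ≠ 0) (h2 : qpR ν q m ≠ 0)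
    (h3 : qpR q q j ≠ 0) (h4 : qpR q q (m - j) ≠ 0)
    (h5 : qpR μ q y ≠ 0) (h6 : qpR (ν * q ^ m) q y ≠ 0) :
    phi q (q ^ y * μ) (q ^ y * ν) j m
      = phi q μ ν j m * q ^ (y * j)
          * (qpR ν q y * qpR (μ * q ^ (m - j)) q y
              / (qpR μ q y * qpR (ν * q ^ m) q y)) :=
  stmt10_general q μ ν j m y h2 h5 h6
end

section
/- Generalized q-binomial expansion in a quadratic algebra: let A, B be elements of an associative (unital) algebra satisfying BA = α AA + β AB + γ BB with α = ν(1-q)/(1-qν), β = (q-ν)/(1-qν), γ = (1-q)/(1-qν). Then with p = (μ-ν)/(1-ν), for every m ∈ ℕ, (pA + (1-p)B)^m = ∑_{j=0}^{m} φ_{q,μ,ν}(j|m) A^j B^{m-j}. -/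
/-!
Put `U = (A - B) / (1 - ν)` and `W = (B - ν A) / (1 - ν)`. The quadratic relation becomes
`W U = q U W`, while `A = U + W`, `B = ν U + W` and `p A + (1 - p) B = μ U + W`. Normal-ordering a
product of linear forms `x_i U + W` yields coefficients which, multiplied by `q ^ (k choose 2)`,
are those of the commutative polynomial `∏ (1 + x_i q^i T)`. Since
`φ(j|m) (ν; q)_m = [m, j]_q ∏_{i<j} (μ - ν q^i) (μ; q)_{m-j}`, the theorem reduces to the
polynomial identity
`∑_j [m, j]_q ∏_{i<j} (μ - ν q^i) (μ; q)_{m-j} ∏_{i<j} (1 + q^i T) ∏_{j≤i<m} (1 + ν q^i T)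
  = (ν; q)_m ∏_{i<m} (1 + μ q^i T)`,
proved by induction on `m`: the summands obey a three-term recurrence whose correction terms
telescope. The factor `q ^ (k choose 2)` is cancelled in `R[q]`, where `q` is not a zero divisor,
before `q` is specialised.
-/

open Finset Polynomial

section QBinomial

variable {R : Type*} [CommRing R]

def qPoch (a q : R) (n : ℕ) : R := ∏ i ∈ range n, (1 - a * q ^ i)

lemma qPoch_succ (a q : R) (n : ℕ) : qPoch a q (n + 1) = qPoch a q n * (1 - a * q ^ n) :=
  prod_range_succ _ _

def qBinom (q : R) : ℕ → ℕ → R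
  | _, 0 => 1
  | 0, _ + 1 => 0
  | m + 1, j + 1 => qBinom q m j + q ^ (j + 1) * qBinom q m (j + 1)

variable (q : R)

@[simp] lemma qBinom_zero_right (m : ℕ) : qBinom q m 0 = 1 := by cases m <;> rfl

lemma qBinom_succ_succ (m j : ℕ) :
    qBinom q (m + 1) (j + 1) = qBinom q m j + q ^ (j + 1) * qBinom q m (j + 1) := rfl

lemma qBinom_eq_zero_of_lt : ∀ {m j : ℕ}, m < j → qBinom q m j = 0
  | 0, _ + 1, _ => rfl
  | _ + 1, _ + 1, h => by
    rw [qBinom_succ_succ, qBinom_eq_zero_of_lt (by omega), qBinom_eq_zero_of_lt (by omega),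
      mul_zero, add_zero]

@[simp] lemma qBinom_self : ∀ m : ℕ, qBinom q m m = 1
  | 0 => rfl
  | m + 1 => by
    rw [qBinom_succ_succ, qBinom_self m, qBinom_eq_zero_of_lt q m.lt_succ_self, mul_zero, add_zero]

lemma one_sub_pow_mul_qBinom_succ (m j : ℕ) :
    (1 - q ^ (j + 1)) * qBinom q m (j + 1) = (1 - q ^ (m - j)) * qBinom q m j := by
  induction m generalizing j with
  | zero => simp [qBinom]
  | succ m ih =>
    rcases j with _ | j
    · have h := ih 0
      simp only [qBinom_succ_succ, qBinom_zero_right, Nat.sub_zero, zero_add] at h ⊢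
      linear_combination q * h
    · rcases le_or_gt m j with hmj | hjm
      · rw [qBinom_eq_zero_of_lt q (by omega), show m + 1 - (j + 1) = 0 by omega]
        ring
      · obtain ⟨d, rfl⟩ : ∃ d, m = j + 1 + d := ⟨m - (j + 1), by omega⟩
        have h1 := ih (j + 1)
        have h2 := ih j
        rw [show j + 1 + d - (j + 1) = d by omega] at h1
        rw [show j + 1 + d - j = d + 1 by omega] at h2
        rw [qBinom_succ_succ, qBinom_succ_succ, show j + 1 + d + 1 - (j + 1) = d + 1 by omega]
        linear_combination q ^ (j + 2) * h1 + h2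

lemma qBinom_succ_succ' (m j : ℕ) :
    qBinom q (m + 1) (j + 1) = q ^ (m - j) * qBinom q m j + qBinom q m (j + 1) := by
  rw [qBinom_succ_succ]
  linear_combination -one_sub_pow_mul_qBinom_succ q m j

lemma qBinom_mul_qPoch_mul_qPoch {m j : ℕ} (hj : j ≤ m) :
    qBinom q m j * (qPoch q q j * qPoch q q (m - j)) = qPoch q q m := by
  induction m generalizing j with
  | zero => simp [Nat.le_zero.mp hj, qPoch]
  | succ m ih =>
    rcases j with _ | j
    · simp [qPoch]
    · rcases Nat.lt_or_ge j m with hjm | hjm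
      · obtain ⟨d, rfl⟩ : ∃ d, m = j + 1 + d := ⟨m - (j + 1), by omega⟩
        have h1 := ih (j := j) (by omega)
        have h2 := ih (j := j + 1) (by omega)
        rw [show j + 1 + d - j = d + 1 by omega, qPoch_succ q q d] at h1
        rw [show j + 1 + d - (j + 1) = d by omega, qPoch_succ q q j] at h2
        rw [qBinom_succ_succ, show j + 1 + d + 1 - (j + 1) = d + 1 by omega, qPoch_succ q q j,
          qPoch_succ q q d, qPoch_succ q q (j + 1 + d)]
        linear_combination (1 - q * q ^ j) * h1 + q ^ (j + 1) * (1 - q * q ^ d) * h2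
      · obtain rfl : j = m := by omega
        simp [qPoch]

lemma map_qPoch {R' : Type*} [CommRing R'] (f : R →+* R') (a q : R) (n : ℕ) :
    f (qPoch a q n) = qPoch (f a) (f q) n := by
  simp [qPoch]

lemma map_qBinom {R' : Type*} [CommRing R'] (f : R →+* R') (q : R) :
    ∀ m j : ℕ, f (qBinom q m j) = qBinom (f q) m j
  | _, 0 => by simp
  | 0, _ + 1 => map_zero f
  | m + 1, j + 1 => by
    simp only [qBinom_succ_succ, map_add, map_mul, map_pow, map_qBinom f q m]

end QBinomial

section NormalOrder

variable {R : Type*} [CommRing R]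

def normalCoeff (q : R) : List R → ℕ → R
  | [], 0 => 1
  | [], _ + 1 => 0
  | _ :: xs, 0 => normalCoeff q xs 0
  | x :: xs, k + 1 => x * normalCoeff q xs k + q ^ (k + 1) * normalCoeff q xs (k + 1)

lemma normalCoeff_eq_zero_of_length_lt (q : R) :
    ∀ {xs : List R} {k : ℕ}, xs.length < k → normalCoeff q xs k = 0
  | [], _ + 1, _ => rfl
  | x :: xs, k + 1, h => by
    simp only [List.length_cons] at h
    rw [normalCoeff, normalCoeff_eq_zero_of_length_lt q (by omega),
      normalCoeff_eq_zero_of_length_lt q (by omega), mul_zero, mul_zero, add_zero]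

lemma map_normalCoeff {R' : Type*} [CommRing R'] (f : R →+* R') (q : R) :
    ∀ (xs : List R) (k : ℕ), f (normalCoeff q xs k) = normalCoeff (f q) (xs.map f) k
  | [], 0 => map_one f
  | [], _ + 1 => map_zero f
  | _ :: xs, 0 => map_normalCoeff f q xs 0
  | x :: xs, k + 1 => by
    simp only [normalCoeff, List.map_cons, map_add, map_mul, map_pow,
      map_normalCoeff f q xs k, map_normalCoeff f q xs (k + 1)]

variable {S : Type*} [Ring S] [Algebra R S] {q : R} {U W : S}

lemma mul_pow_eq_smul_pow_mul (hWU : W * U = q • (U * W)) (n : ℕ) :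
    W * U ^ n = q ^ n • (U ^ n * W) := by
  induction n with
  | zero => simp
  | succ n ih =>
    rw [pow_succ, ← mul_assoc, ih, smul_mul_assoc, mul_assoc, hWU, mul_smul_comm, smul_smul,
      ← pow_succ, ← mul_assoc, ← pow_succ]

theorem list_prod_map_smul_add (hWU : W * U = q • (U * W)) (xs : List R) :
    (xs.map (· • U + W)).prod
      = ∑ k ∈ range (xs.length + 1), normalCoeff q xs k • (U ^ k * W ^ (xs.length - k)) := by
  induction xs with
  | nil => simp [normalCoeff]
  | cons x xs ih =>
    set n := xs.length
    set c := normalCoeff q xs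
    have hstep : ∀ k ∈ range (n + 1), (x • U + W) * (c k • (U ^ k * W ^ (n - k)))
        = (x * c k) • (U ^ (k + 1) * W ^ (n + 1 - (k + 1)))
          + (q ^ k * c k) • (U ^ k * W ^ (n + 1 - k)) := by
      intro k hk
      have hk : n + 1 - k = n - k + 1 := by rw [mem_range] at hk; omega
      rw [add_mul, smul_mul_assoc, mul_smul_comm, ← mul_assoc, ← pow_succ', smul_smul,
        mul_smul_comm, ← mul_assoc, mul_pow_eq_smul_pow_mul hWU, smul_mul_assoc, mul_assoc,
        ← pow_succ', smul_smul, Nat.add_sub_add_right, hk, mul_comm (c k)]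
    have hlast : ∑ k ∈ range (n + 1), (q ^ k * c k) • (U ^ k * W ^ (n + 1 - k))
        = ∑ k ∈ range (n + 2), (q ^ k * c k) • (U ^ k * W ^ (n + 1 - k)) := by
      have hc : c (n + 1) = 0 := normalCoeff_eq_zero_of_length_lt q n.lt_succ_self
      rw [sum_range_succ _ (n + 1), hc, mul_zero, zero_smul, add_zero]
    rw [List.map_cons, List.prod_cons, ih, mul_sum, sum_congr rfl hstep, sum_add_distrib, hlast,
      sum_range_succ' _ (n + 1), ← add_assoc, ← sum_add_distrib, List.length_cons,
      sum_range_succ' _ (n + 1)]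
    simp only [← add_smul, pow_zero, one_mul]
    rfl

theorem smul_add_pow_eq_sum (hWU : W * U = q • (U * W)) {μ ν : R} (m : ℕ) (c : ℕ → R)
    (hc : ∀ k, ∑ j ∈ range (m + 1),
        c j * normalCoeff q (List.replicate j 1 ++ List.replicate (m - j) ν) k
      = normalCoeff q (List.replicate m μ) k) :
    (μ • U + W) ^ m = ∑ j ∈ range (m + 1), c j • ((U + W) ^ j * (ν • U + W) ^ (m - j)) := by
  have hword (j : ℕ) (hj : j ≤ m) : (U + W) ^ j * (ν • U + W) ^ (m - j)
      = ∑ k ∈ range (m + 1), normalCoeff q (List.replicate j 1 ++ List.replicate (m - j) ν) k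
          • (U ^ k * W ^ (m - k)) := by
    have h := list_prod_map_smul_add hWU (List.replicate j 1 ++ List.replicate (m - j) ν)
    rw [List.length_append, List.length_replicate, List.length_replicate, Nat.add_sub_cancel' hj]
      at h
    rw [← h, List.map_append, List.prod_append, List.map_replicate, List.map_replicate,
      List.prod_replicate, List.prod_replicate, one_smul]
  calc (μ • U + W) ^ m
      = ∑ k ∈ range (m + 1), normalCoeff q (List.replicate m μ) k • (U ^ k * W ^ (m - k)) := by
        simpa using list_prod_map_smul_add hWU (List.replicate m μ)
    _ = ∑ k ∈ range (m + 1), ∑ j ∈ range (m + 1),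
          (c j * normalCoeff q (List.replicate j 1 ++ List.replicate (m - j) ν) k)
            • (U ^ k * W ^ (m - k)) := by
        simp_rw [← hc, sum_smul]
    _ = ∑ j ∈ range (m + 1), c j • ((U + W) ^ j * (ν • U + W) ^ (m - j)) := by
        rw [sum_comm]
        refine sum_congr rfl fun j hj => ?_
        rw [hword j (Nat.lt_succ_iff.mp (mem_range.mp hj)), smul_sum]
        simp_rw [smul_smul]

end NormalOrder

section GeneratingPolynomial

variable {R : Type*} [CommRing R] (q : R)

noncomputable def linProd : ℕ → List R → R[X]
  | _, [] => 1
  | a, x :: xs => (1 + C (x * q ^ a) * X) * linProd (a + 1) xs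

lemma coeff_linProd :
    ∀ (xs : List R) (a k : ℕ),
      (linProd q a xs).coeff k = q ^ (a * k + k.choose 2) * normalCoeff q xs k
  | [], _, 0 => by simp [linProd, normalCoeff]
  | [], _, _ + 1 => by simp [linProd, normalCoeff, coeff_one]
  | x :: xs, a, 0 => by
    simp [linProd, normalCoeff, add_mul, mul_assoc, coeff_linProd xs]
  | x :: xs, a, k + 1 => by
    rw [linProd, add_mul, one_mul, mul_assoc, coeff_add, coeff_C_mul, coeff_X_mul,
      coeff_linProd xs, coeff_linProd xs, normalCoeff, Nat.choose_succ_succ',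
      Nat.choose_one_right]
    ring

lemma linProd_append (xs ys : List R) (a : ℕ) :
    linProd q a (xs ++ ys) = linProd q a xs * linProd q (a + xs.length) ys := by
  induction xs generalizing a with
  | nil => simp [linProd]
  | cons x xs ih => rw [List.cons_append, linProd, linProd, ih, List.length_cons, mul_assoc,
      add_right_comm, add_assoc]

lemma linProd_replicate_succ (x : R) (a n : ℕ) :
    linProd q a (List.replicate (n + 1) x)
      = linProd q a (List.replicate n x) * (1 + C (x * q ^ (a + n)) * X) := by
  rw [List.replicate_succ', linProd_append, List.length_replicate, linProd, linProd, mul_one]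

end GeneratingPolynomial

section Telescoping

variable {R : Type*} [CommRing R] (q μ ν : R)

def qWeight (m j : ℕ) : R :=
  qBinom q m j * (∏ i ∈ range j, (μ - ν * q ^ i)) * qPoch μ q (m - j)

noncomputable def expansionTerm (m j : ℕ) : R[X] :=
  C (qWeight q μ ν m j)
    * (linProd q 0 (List.replicate j 1) * linProd q j (List.replicate (m - j) ν))

noncomputable def stepPoly (m : ℕ) : R[X] := C (1 - ν * q ^ m) * (1 + C (μ * q ^ m) * X)

noncomputable def shiftPoly (m j : ℕ) : R[X] :=
  C (q ^ (m - j) * (μ - ν * q ^ j)) * (1 + C (q ^ j) * X)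

lemma expansionTerm_eq_zero_of_lt {m j : ℕ} (h : m < j) : expansionTerm q μ ν m j = 0 := by
  simp [expansionTerm, qWeight, qBinom_eq_zero_of_lt q h]

lemma expansionTerm_succ_zero (m : ℕ) :
    expansionTerm q μ ν (m + 1) 0
      = (stepPoly q μ ν m - shiftPoly q μ ν m 0) * expansionTerm q μ ν m 0 := by
  simp only [expansionTerm, qWeight, stepPoly, shiftPoly, qBinom_zero_right, prod_range_zero,
    Nat.sub_zero, qPoch_succ, linProd_replicate_succ, zero_add, map_mul, map_sub,
    map_pow, map_one, pow_zero, one_mul, mul_one]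
  ring

lemma expansionTerm_succ_succ (m j : ℕ) :
    expansionTerm q μ ν (m + 1) (j + 1)
      = (stepPoly q μ ν m - shiftPoly q μ ν m (j + 1)) * expansionTerm q μ ν m (j + 1)
        + shiftPoly q μ ν m j * expansionTerm q μ ν m j := by
  rcases lt_trichotomy j m with hjm | rfl | hjm
  · obtain ⟨d, rfl⟩ : ∃ d, m = j + 1 + d := ⟨m - (j + 1), by omega⟩
    have hratio := congrArg C (one_sub_pow_mul_qBinom_succ q (j + 1 + d) j)
    have hP : linProd q 0 (List.replicate (j + 1) 1)
        = linProd q 0 (List.replicate j 1) * (1 + C (q ^ j) * X) := by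
      rw [linProd_replicate_succ, one_mul, zero_add]
    have hD : linProd q j (List.replicate (d + 1) ν)
        = (1 + C (ν * q ^ j) * X) * linProd q (j + 1) (List.replicate d ν) := rfl
    simp only [expansionTerm, qWeight, stepPoly, shiftPoly,
      show j + 1 + d + 1 - (j + 1) = d + 1 by omega, show j + 1 + d - (j + 1) = d by omega,
      show j + 1 + d - j = d + 1 by omega, qBinom_succ_succ', hP, hD, linProd_replicate_succ,
      prod_range_succ, qPoch_succ, map_mul, map_sub, map_add, map_pow, map_one] at hratio ⊢
    linear_combination (C (qPoch μ q d) * C (∏ i ∈ range j, (μ - ν * q ^ i))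
      * (C μ - C ν * C q ^ j) * linProd q 0 (List.replicate j 1) * (1 + C q ^ j * X)
      * linProd q (j + 1) (List.replicate d ν) * C q ^ (j + 1 + d) * C ν * X
      * (1 - C μ * C q ^ d)) * hratio
  · simp only [expansionTerm_eq_zero_of_lt q μ ν j.lt_succ_self, mul_zero, zero_add]
    simp only [expansionTerm, qWeight, shiftPoly, Nat.sub_self, qBinom_self, prod_range_succ,
      linProd_replicate_succ, List.replicate_zero, linProd, qPoch, prod_range_zero, map_mul,
      pow_zero, zero_add, one_mul, mul_one]
    ring
  · simp only [expansionTerm_eq_zero_of_lt q μ ν hjm,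
      expansionTerm_eq_zero_of_lt q μ ν (show m + 1 < j + 1 by omega),
      expansionTerm_eq_zero_of_lt q μ ν (show m < j + 1 by omega), mul_zero, add_zero]

lemma sum_expansionTerm_succ (m : ℕ) :
    ∑ j ∈ range (m + 2), expansionTerm q μ ν (m + 1) j
      = stepPoly q μ ν m * ∑ j ∈ range (m + 1), expansionTerm q μ ν m j := by
  set τ := expansionTerm q μ ν m
  set ρ := shiftPoly q μ ν m
  have hshift := sum_range_succ' (fun j => (stepPoly q μ ν m - ρ j) * τ j) (m + 1)
  have hτ : τ (m + 1) = 0 := expansionTerm_eq_zero_of_lt q μ ν m.lt_succ_self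
  rw [sum_range_succ, hτ, mul_zero, add_zero] at hshift
  rw [sum_range_succ', expansionTerm_succ_zero]
  simp only [expansionTerm_succ_succ]
  rw [sum_add_distrib, add_right_comm, ← hshift, ← sum_add_distrib, mul_sum]
  exact sum_congr rfl fun j _ => by ring

theorem sum_expansionTerm (m : ℕ) :
    ∑ j ∈ range (m + 1), expansionTerm q μ ν m j
      = C (qPoch ν q m) * linProd q 0 (List.replicate m μ) := by
  induction m with
  | zero => simp [expansionTerm, qWeight, qPoch, linProd]
  | succ m ih =>
    rw [sum_expansionTerm_succ, ih, stepPoly, qPoch_succ, linProd_replicate_succ, zero_add]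
    simp only [map_mul]
    ring

end Telescoping

section CoefficientIdentity

variable {R : Type*} [CommRing R]

lemma map_qWeight {R' : Type*} [CommRing R'] (f : R →+* R') (q μ ν : R) (m j : ℕ) :
    f (qWeight q μ ν m j) = qWeight (f q) (f μ) (f ν) m j := by
  simp [qWeight, map_qPoch, map_qBinom]

lemma sum_qWeight_mul_normalCoeff_of_isRegular {q : R} (hq : IsRegular q) (μ ν : R) (m k : ℕ) :
    ∑ j ∈ range (m + 1), qWeight q μ ν m j
        * normalCoeff q (List.replicate j 1 ++ List.replicate (m - j) ν) k
      = qPoch ν q m * normalCoeff q (List.replicate m μ) k := by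
  have hjoin (j : ℕ) : linProd q 0 (List.replicate j 1) * linProd q j (List.replicate (m - j) ν)
      = linProd q 0 (List.replicate j 1 ++ List.replicate (m - j) ν) := by
    rw [linProd_append, List.length_replicate, zero_add]
  have h := congrArg (coeff · k) (sum_expansionTerm q μ ν m)
  simp only [expansionTerm, hjoin, finsetSum_coeff, coeff_C_mul, coeff_linProd, zero_mul,
    zero_add] at h
  apply (hq.pow (k.choose 2)).left
  simp only [mul_sum, mul_left_comm _ (q ^ k.choose 2)] at h ⊢
  exact h

theorem sum_qWeight_mul_normalCoeff (q μ ν : R) (m k : ℕ) :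
    ∑ j ∈ range (m + 1), qWeight q μ ν m j
        * normalCoeff q (List.replicate j 1 ++ List.replicate (m - j) ν) k
      = qPoch ν q m * normalCoeff q (List.replicate m μ) k := by
  have h := congrArg (evalRingHom q)
    (sum_qWeight_mul_normalCoeff_of_isRegular isRegular_X (C μ) (C ν) m k)
  simp only [map_sum, map_mul, map_qWeight, map_qPoch, map_normalCoeff, List.map_append,
    List.map_replicate, map_one] at h
  simpa using h

end CoefficientIdentity

lemma sub_smul_mul_sub_eq_smul_mul {K S : Type*} [Field K] [Ring S] [Algebra K S] {q ν : K}
    (hqν : q * ν ≠ 1) {A B : S}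
    (hAB : B * A = (ν * (1 - q) / (1 - q * ν)) • (A * A)
        + ((q - ν) / (1 - q * ν)) • (A * B) + ((1 - q) / (1 - q * ν)) • (B * B)) :
    (B - ν • A) * (A - B) = q • ((A - B) * (B - ν • A)) := by
  have h : 1 - ν * q ≠ 0 := sub_ne_zero.mpr (mul_comm q ν ▸ Ne.symm hqν)
  have key : (B - ν • A) * (A - B) - q • ((A - B) * (B - ν • A))
      = (1 - q * ν) • (B * A - ((ν * (1 - q) / (1 - q * ν)) • (A * A)
        + ((q - ν) / (1 - q * ν)) • (A * B) + ((1 - q) / (1 - q * ν)) • (B * B))) := by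
    simp only [sub_mul, mul_sub, smul_mul_assoc, mul_smul_comm, smul_sub, smul_add, smul_smul]
    match_scalars <;> field_simp <;> ring
  rw [← sub_eq_zero, key, hAB, sub_self, smul_zero]

section RealParameters

lemma qPoch_ne_zero {a q : ℝ} (ha : |a| < 1) (hq : |q| ≤ 1) (n : ℕ) : qPoch a q n ≠ 0 := by
  refine prod_ne_zero_iff.mpr fun i _ => sub_ne_zero.mpr fun h => ?_
  have hlt : |a * q ^ i| < 1 := by
    rw [abs_mul, abs_pow]
    exact mul_lt_one_of_nonneg_of_lt_one_left (abs_nonneg a) ha (pow_le_one₀ (abs_nonneg q) hq)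
  rw [← h, abs_one] at hlt
  exact lt_irrefl 1 hlt

lemma pow_mul_qPoch_div {K : Type*} [Field K] {μ : K} (hμ : μ ≠ 0) (ν q : K) (j : ℕ) :
    μ ^ j * qPoch (ν / μ) q j = ∏ i ∈ range j, (μ - ν * q ^ i) := by
  induction j with
  | zero => simp [qPoch]
  | succ j ih =>
    rw [pow_succ, qPoch_succ, prod_range_succ, ← ih]
    field_simp

lemma phi_mul_qPoch {q μ ν : ℝ} (hq : |q| < 1) (hμ : μ ≠ 0) (hν : |ν| < 1) {m j : ℕ}
    (hj : j ≤ m) : phi q μ ν j m * qPoch ν q m = qWeight q μ ν m j := by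
  have hq' := qPoch_ne_zero hq hq.le
  have hD : qPoch ν q m * qPoch q q j * qPoch q q (m - j) ≠ 0 :=
    mul_ne_zero (mul_ne_zero (qPoch_ne_zero hν hq.le m) (hq' j)) (hq' (m - j))
  rw [phi, show qpR = qPoch from rfl, div_mul_eq_mul_div, div_eq_iff hD, qWeight,
    ← pow_mul_qPoch_div hμ, ← qBinom_mul_qPoch_mul_qPoch q hj]
  ring

lemma sum_phi_mul_normalCoeff {q μ ν : ℝ} (hq : |q| < 1) (hμ : μ ≠ 0) (hν : |ν| < 1)
    (m k : ℕ) :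
    ∑ j ∈ range (m + 1), phi q μ ν j m
        * normalCoeff q (List.replicate j 1 ++ List.replicate (m - j) ν) k
      = normalCoeff q (List.replicate m μ) k := by
  refine mul_left_cancel₀ (qPoch_ne_zero hν hq.le m) ?_
  rw [← sum_qWeight_mul_normalCoeff, mul_sum]
  refine sum_congr rfl fun j hj => ?_
  rw [← phi_mul_qPoch hq hμ hν (Nat.lt_succ_iff.mp (mem_range.mp hj))]
  ring

end RealParameters

theorem stmt15 {S : Type*} [Ring S] [Algebra ℝ S]
    (q μ ν : ℝ) (hq : |q| < 1) (hν : 0 ≤ ν) (hνμ : ν ≤ μ) (hμ0 : 0 < μ) (hμ : μ < 1)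
    (hqν : q * ν ≠ 1) (hν1 : ν ≠ 1)
    (A B : S)
    (hAB : B * A = (ν * (1 - q) / (1 - q * ν)) • (A * A)
        + ((q - ν) / (1 - q * ν)) • (A * B) + ((1 - q) / (1 - q * ν)) • (B * B))
    (m : ℕ) :
    (((μ - ν) / (1 - ν)) • A + ((1 - μ) / (1 - ν)) • B) ^ m
      = ∑ j ∈ Finset.range (m + 1), phi q μ ν j m • (A ^ j * B ^ (m - j)) := by
  have h1ν : 1 - ν ≠ 0 := sub_ne_zero.mpr (Ne.symm hν1)
  set U := (1 - ν)⁻¹ • (A - B)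
  set W := (1 - ν)⁻¹ • (B - ν • A)
  have hA : A = U + W := by
    simp only [U, W]; match_scalars <;> field_simp <;> ring
  have hB : B = ν • U + W := by
    simp only [U, W]; match_scalars <;> field_simp <;> ring
  have hL : ((μ - ν) / (1 - ν)) • A + ((1 - μ) / (1 - ν)) • B = μ • U + W := by
    simp only [U, W]; match_scalars <;> field_simp <;> ring
  have hWU : W * U = q • (U * W) := by
    simp only [U, W]
    rw [smul_mul_smul_comm, smul_mul_smul_comm, sub_smul_mul_sub_eq_smul_mul hqν hAB, smul_comm]
  have hν' : |ν| < 1 := abs_lt.mpr ⟨by linarith, by linarith⟩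
  rw [hL, smul_add_pow_eq_sum hWU m _ (sum_phi_mul_normalCoeff hq hμ0.ne' hν' m), ← hA, ← hB]
end
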